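/- Let m ≥ 1, c ≥ 1, k ≥ 1, and let B ⊆ ℤ/mℤ be a proper 1-dimensional arithmetic progression {a₀ + n·a₁ : n ∈ I₁} with the representation unique and |B| ≥ √m. If φ : ℤ/mℤ → ℂ satisfies ‖φ‖_∞ ≤ c and |C(φ,a)| ≤ c√m for all a outside a set D of size ≤ c, then |∑_{x∈B} φ(x)| ≤ K·|B|·(√m/|B|)^{1/3} for a constant K depending only on c. -/

import Mathlib

open Finset

/-!
Sliding-window argument. Replacing the progression sum `S` by the average of its `H` translates
by multiples of the common difference `a₁` costs `O(Hc)`, and `H • S` becomes the sum over the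
progression of the window sums `G y = ∑_{h<H} φ (y + h a₁)`. Cauchy–Schwarz bounds this by
`√(|B| ∑_y |G y|²)`, and `∑_y |G y|² = ∑_{h,h'<H} C(φ, (h' - h) a₁)`. Since `h ↦ h a₁` is
injective, at most `H |D|` of these `H²` correlations are exceptional (each `≤ c² m`), the others
are `≤ c √m`. The choice `H ≈ t = |B| (√m / |B|)^{1/3}`, i.e. `t³ = |B|² √m`, balances the terms.
-/

/-- The additive autocorrelation of `φ` at shift `a`. -/
noncomputable def corr {m : ℕ} [NeZero m] (φ : ZMod m → ℂ) (a : ZMod m) : ℂ :=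
  ∑ x : ZMod m, φ x * (starRingEnd ℂ) (φ (x + a))

section Shift

variable {E : Type*} [SeminormedAddCommGroup E] {f : ℕ → E} {c : ℝ}

theorem norm_sum_le_card_mul_of_norm_le {ι : Type*} (s : Finset ι) {g : ι → E}
    (hg : ∀ i, ‖g i‖ ≤ c) : ‖∑ i ∈ s, g i‖ ≤ #s * c := by
  simpa using norm_sum_le_of_le s fun i _ => hg i

theorem norm_sum_range_add_sub_sum_range_le (hf : ∀ k, ‖f k‖ ≤ c) (N h : ℕ) :
    ‖∑ k ∈ range N, f (h + k) - ∑ k ∈ range N, f k‖ ≤ 2 * h * c := by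
  have hswap : ∑ k ∈ range N, f (h + k) - ∑ k ∈ range N, f k =
      ∑ j ∈ range h, f (N + j) - ∑ j ∈ range h, f j := by
    rw [sub_eq_sub_iff_add_eq_add, add_comm, ← sum_range_add, add_comm h, sum_range_add,
      add_comm]
  rw [hswap]
  calc _ ≤ ‖∑ j ∈ range h, f (N + j)‖ + ‖∑ j ∈ range h, f j‖ := norm_sub_le _ _
    _ ≤ h * c + h * c := by
      gcongr <;> simpa using norm_sum_le_card_mul_of_norm_le (range h) fun _ => hf _
    _ = 2 * h * c := by ring

theorem mul_norm_sum_range_le [NormedSpace ℝ E] (hf : ∀ k, ‖f k‖ ≤ c) (N H : ℕ) :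
    H * ‖∑ k ∈ range N, f k‖ ≤
      ‖∑ k ∈ range N, ∑ h ∈ range H, f (h + k)‖ + 2 * H ^ 2 * c := by
  have hc : 0 ≤ c := (norm_nonneg _).trans (hf 0)
  have hsplit : H • ∑ k ∈ range N, f k = ∑ k ∈ range N, ∑ h ∈ range H, f (h + k) -
      ∑ h ∈ range H, (∑ k ∈ range N, f (h + k) - ∑ k ∈ range N, f k) := by
    rw [sum_comm, sum_sub_distrib, sum_const, card_range, sub_sub_cancel]
  have herr : ‖∑ h ∈ range H, (∑ k ∈ range N, f (h + k) - ∑ k ∈ range N, f k)‖ ≤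
      H * (2 * H * c) := by
    refine (norm_sum_le_of_le _ fun h hh => ?_).trans_eq
      (by rw [sum_const, card_range, nsmul_eq_mul])
    calc _ ≤ 2 * h * c := norm_sum_range_add_sub_sum_range_le hf N h
      _ ≤ 2 * H * c := by gcongr; exact (mem_range.mp hh).le
  calc (H : ℝ) * ‖∑ k ∈ range N, f k‖ = ‖H • ∑ k ∈ range N, f k‖ := by
        rw [← Nat.cast_smul_eq_nsmul ℝ, norm_smul, Real.norm_natCast]
    _ ≤ _ := hsplit ▸ norm_sub_le _ _
    _ ≤ _ := by linarith

end Shift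

theorem sq_norm_sum_comp_le {ι α E : Type*} [Fintype α] [SeminormedAddCommGroup E]
    (g : α → E) {s : Finset ι} {e : ι → α} (he : Set.InjOn e s) :
    ‖∑ i ∈ s, g (e i)‖ ^ 2 ≤ #s * ∑ y, ‖g y‖ ^ 2 := by
  classical
  calc ‖∑ i ∈ s, g (e i)‖ ^ 2 ≤ (∑ i ∈ s, ‖g (e i)‖) ^ 2 := by gcongr; exact norm_sum_le _ _
    _ ≤ #s * ∑ i ∈ s, ‖g (e i)‖ ^ 2 := sq_sum_le_card_mul_sum_sq
    _ = #s * ∑ y ∈ s.image e, ‖g y‖ ^ 2 := by rw [sum_image he]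
    _ ≤ #s * ∑ y, ‖g y‖ ^ 2 := by
      gcongr
      exact subset_univ _

theorem card_filter_sub_mem_le {ι G : Type*} [AddGroup G] [DecidableEq G] {s : Finset ι}
    {e : ι → G} (he : Set.InjOn e s) (D : Finset G) :
    #{p ∈ s ×ˢ s | e p.2 - e p.1 ∈ D} ≤ #s * #D := by
  rw [← card_product]
  refine card_le_card_of_injOn (fun p => (p.1, e p.2 - e p.1)) ?_ ?_
  · intro p hp
    simp only [coe_filter, mem_product, Set.mem_ofPred_eq] at hp
    simp [hp.1.1, hp.2]
  · intro p hp q hq hpq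
    simp only [coe_filter, mem_product, Set.mem_ofPred_eq] at hp hq
    obtain ⟨h1, h2⟩ := Prod.mk.inj hpq
    rw [h1, sub_left_inj] at h2
    exact Prod.ext h1 (he hp.1.2 hq.1.2 h2)

section Correlation

variable {m : ℕ} [NeZero m] {φ : ZMod m → ℂ} {c : ℝ}

theorem norm_corr_le (hφ : ∀ x, ‖φ x‖ ≤ c) (a : ZMod m) : ‖corr φ a‖ ≤ m * c ^ 2 := by
  have hc : 0 ≤ c := (norm_nonneg _).trans (hφ 0)
  calc ‖corr φ a‖ ≤ ∑ x : ZMod m, ‖φ x * (starRingEnd ℂ) (φ (x + a))‖ := norm_sum_le _ _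
    _ ≤ ∑ _x : ZMod m, c ^ 2 := by
      gcongr with x
      rw [norm_mul, Complex.norm_conj, sq]
      exact mul_le_mul (hφ _) (hφ _) (norm_nonneg _) hc
    _ = m * c ^ 2 := by simp

theorem sum_norm_sq_sum_shift_eq_sum_corr (φ : ZMod m → ℂ) {ι : Type*} (s : Finset ι)
    (e : ι → ZMod m) :
    ((∑ y, ‖∑ i ∈ s, φ (y + e i)‖ ^ 2 : ℝ) : ℂ) = ∑ p ∈ s ×ˢ s, corr φ (e p.2 - e p.1) := by
  push_cast
  simp_rw [← Complex.mul_conj', map_sum, sum_mul_sum, sum_product]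
  rw [sum_comm]
  refine sum_congr rfl fun i _ => ?_
  rw [sum_comm]
  refine sum_congr rfl fun j _ => ?_
  exact Fintype.sum_equiv (Equiv.addRight (e i)) _ _ fun x => by
    simp only [Equiv.coe_addRight, add_add_sub_cancel]

theorem sum_norm_sq_sum_shift_le {ε : ℝ} (hφ : ∀ x, ‖φ x‖ ≤ c) (hε : 0 ≤ ε)
    {ι : Type*} {s : Finset ι} {e : ι → ZMod m} (he : Set.InjOn e s) (D : Finset (ZMod m))
    (hcorr : ∀ a ∉ D, ‖corr φ a‖ ≤ ε) :
    ∑ y, ‖∑ i ∈ s, φ (y + e i)‖ ^ 2 ≤ #s ^ 2 * ε + #s * #D * (m * c ^ 2) := by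
  set P := s ×ˢ s
  have hgood : #{p ∈ P | e p.2 - e p.1 ∉ D} ≤ #s ^ 2 := by
    grw [filter_subset, card_product, sq]
  calc ∑ y, ‖∑ i ∈ s, φ (y + e i)‖ ^ 2 = ‖∑ p ∈ P, corr φ (e p.2 - e p.1)‖ := by
        rw [← sum_norm_sq_sum_shift_eq_sum_corr, Complex.norm_real, Real.norm_of_nonneg]
        positivity
    _ ≤ ∑ p ∈ P, ‖corr φ (e p.2 - e p.1)‖ := norm_sum_le _ _
    _ = ∑ p ∈ P with e p.2 - e p.1 ∉ D, ‖corr φ (e p.2 - e p.1)‖ +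
        ∑ p ∈ P with e p.2 - e p.1 ∈ D, ‖corr φ (e p.2 - e p.1)‖ := by
      rw [add_comm, sum_filter_add_sum_filter_not]
    _ ≤ #{p ∈ P | e p.2 - e p.1 ∉ D} * ε + #{p ∈ P | e p.2 - e p.1 ∈ D} * (m * c ^ 2) := by
      gcongr
      · exact (sum_le_card_nsmul _ _ _ fun p hp => hcorr _ (mem_filter.mp hp).2).trans_eq
          (nsmul_eq_mul _ _)
      · exact (sum_le_card_nsmul _ _ _ fun p _ => norm_corr_le hφ _).trans_eq
          (nsmul_eq_mul _ _)
    _ ≤ #s ^ 2 * ε + #s * #D * (m * c ^ 2) := by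
      gcongr
      · exact_mod_cast hgood
      · exact_mod_cast card_filter_sub_mem_le he D

theorem mul_norm_sum_ap_le {ε : ℝ} (hφ : ∀ x, ‖φ x‖ ≤ c) (hε : 0 ≤ ε) {b a : ZMod m}
    {N H : ℕ} (hinj : Set.InjOn (fun k : ℕ => b + k * a) (range N)) (hHN : H ≤ N)
    (D : Finset (ZMod m)) (hcorr : ∀ a ∉ D, ‖corr φ a‖ ≤ ε) :
    H * ‖∑ k ∈ range N, φ (b + k * a)‖ ≤
      √(N * (H ^ 2 * ε + H * #D * (m * c ^ 2))) + 2 * H ^ 2 * c := by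
  set G : ZMod m → ℂ := fun y => ∑ h ∈ range H, φ (y + h * a)
  have hslide : ∑ k ∈ range N, ∑ h ∈ range H, φ (b + ↑(h + k) * a) =
      ∑ k ∈ range N, G (b + k * a) := by
    refine sum_congr rfl fun k _ => sum_congr rfl fun h _ => ?_
    congr 1
    push_cast
    ring
  have hinjH : Set.InjOn (fun h : ℕ => (h : ZMod m) * a) (range H) := fun h hh h' hh' heq =>
    hinj (range_subset_range.mpr hHN hh) (range_subset_range.mpr hHN hh')
      (congrArg (b + ·) heq)
  have hCS : ‖∑ k ∈ range N, G (b + k * a)‖ ≤ √(N * ∑ y, ‖G y‖ ^ 2) :=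
    Real.le_sqrt_of_sq_le (by simpa using sq_norm_sum_comp_le G hinj)
  calc _ ≤ ‖∑ k ∈ range N, ∑ h ∈ range H, φ (b + ↑(h + k) * a)‖ + 2 * H ^ 2 * c :=
        mul_norm_sum_range_le (f := fun k => φ (b + k * a)) (fun _ => hφ _) N H
    _ ≤ _ := by
      grw [hslide, hCS, sum_norm_sq_sum_shift_le hφ hε hinjH D hcorr]
      simp

end Correlation

theorem Int.Icc_eq_image_range (a b : ℤ) :
    Icc a b = (Finset.range #(Icc a b)).image (fun k : ℕ => a + k) := by
  ext x
  simp only [mem_Icc, mem_image, mem_range, Int.card_Icc]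
  constructor
  · exact fun hx => ⟨(x - a).toNat, by omega, by omega⟩
  · rintro ⟨k, hk, rfl⟩
    omega

section Reindex

variable {R : Type*} [Ring R] {a₀ a₁ : R} {n₁ n₂ : ℤ}

theorem image_Icc_eq_image_range [DecidableEq R] :
    (Icc n₁ n₂).image (fun n : ℤ => a₀ + n * a₁) =
      (range #(Icc n₁ n₂)).image (fun k : ℕ => (a₀ + n₁ * a₁) + k * a₁) := by
  conv_lhs => rw [Int.Icc_eq_image_range, image_image]
  congr 1
  funext k
  simp only [Function.comp_apply, Int.cast_add, Int.cast_natCast]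
  noncomm_ring

theorem injOn_range_of_injOn_Icc (h : Set.InjOn (fun n : ℤ => a₀ + n * a₁) (Icc n₁ n₂)) :
    Set.InjOn (fun k : ℕ => (a₀ + n₁ * a₁) + k * a₁) (range #(Icc n₁ n₂)) := by
  have hmem : ∀ k ∈ range #(Icc n₁ n₂), n₁ + (k : ℤ) ∈ (Icc n₁ n₂ : Set ℤ) := fun k hk => by
    rw [Int.Icc_eq_image_range]
    exact mem_image_of_mem _ hk
  intro k hk l hl hkl
  have := h (hmem k hk) (hmem l hl)
    (by simpa only [Int.cast_add, Int.cast_natCast, add_mul, add_assoc] using hkl)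
  omega

end Reindex

theorem le_of_pow_three_eq {s N t : ℝ} (hs : 0 ≤ s) (hsN : s ≤ N)
    (hcube : t ^ 3 = N ^ 2 * s) : t ≤ N := by
  refine le_of_pow_le_pow_left₀ three_ne_zero (hs.trans hsN) ?_
  rw [hcube, pow_succ]
  exact mul_le_mul_of_nonneg_left hsN (sq_nonneg N)

theorem le_of_mul_le_sqrt_add {c d s N t H A : ℝ} (hc : 1 ≤ c) (hd : d ≤ c)
    (hs : 0 ≤ s) (hsN : s ≤ N) (ht : 0 < t) (hcube : t ^ 3 = N ^ 2 * s) (htH : t ≤ H)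
    (hHt : H ≤ 2 * t)
    (hA : H * A ≤ √(N * (H ^ 2 * (c * s) + H * d * (s ^ 2 * c ^ 2))) + 2 * H ^ 2 * c) :
    A ≤ 6 * c ^ 2 * t := by
  have hH : 0 < H := ht.trans_le htH
  have hN : 0 ≤ N := hs.trans hsN
  have htN := le_of_pow_three_eq hs hsN hcube
  have hNs : N * s ≤ t ^ 2 := by
    refine le_of_mul_le_mul_right ?_ ht
    nlinarith [mul_le_mul_of_nonneg_left htN (mul_nonneg hN hs)]
  have hNs2 : N * s ^ 2 ≤ H * t ^ 2 := by
    nlinarith [mul_le_mul_of_nonneg_left hsN (mul_nonneg hN hs),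
      mul_le_mul_of_nonneg_right htH (sq_nonneg t)]
  have hrad : N * (H ^ 2 * (c * s) + H * d * (s ^ 2 * c ^ 2)) ≤ (2 * c ^ 2 * H * t) ^ 2 := by
    have hc1 : c ≤ c ^ 4 := by simpa using pow_le_pow_right₀ hc (show 1 ≤ 4 by norm_num)
    have hc3 : c ^ 3 ≤ c ^ 4 := pow_le_pow_right₀ hc (by norm_num)
    calc N * (H ^ 2 * (c * s) + H * d * (s ^ 2 * c ^ 2))
        = H ^ 2 * c * (N * s) + H * d * c ^ 2 * (N * s ^ 2) := by ring
      _ ≤ H ^ 2 * c * t ^ 2 + H * c * c ^ 2 * (H * t ^ 2) := by gcongr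
      _ = H ^ 2 * t ^ 2 * (c + c ^ 3) := by ring
      _ ≤ H ^ 2 * t ^ 2 * (4 * c ^ 4) := by gcongr; linarith
      _ = (2 * c ^ 2 * H * t) ^ 2 := by ring
  have hsqrt : √(N * (H ^ 2 * (c * s) + H * d * (s ^ 2 * c ^ 2))) ≤ 2 * c ^ 2 * H * t :=
    Real.sqrt_le_left (by positivity) |>.mpr hrad
  have herr : 2 * H ^ 2 * c ≤ 4 * c ^ 2 * H * t := by
    nlinarith [mul_le_mul_of_nonneg_left hHt (by positivity : (0:ℝ) ≤ 2 * H * c),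
      mul_le_mul_of_nonneg_left (show c ≤ c ^ 2 by nlinarith) (by positivity : (0:ℝ) ≤ 4 * H * t)]
  refine le_of_mul_le_mul_left ?_ hH
  linarith

theorem mul_rpow_one_third_pow_three {N s : ℝ} (hN : 0 < N) (hs : 0 ≤ s) :
    (N * (s / N) ^ (1 / 3 : ℝ)) ^ 3 = N ^ 2 * s := by
  have hroot : ((s / N) ^ (1 / 3 : ℝ)) ^ 3 = s / N := by
    simpa using Real.rpow_inv_natCast_pow (n := 3) (by positivity : 0 ≤ s / N) (by norm_num)
  rw [mul_pow, hroot]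
  field_simp

/-- The `k = 1` case of Theorem 3: sums of a function satisfying Condition `H(c)`
over a proper `1`-dimensional arithmetic progression `B = {a₀ + n·a₁ : n ∈ I₁}`
of size at least `√m`. -/
theorem sliding_sum_gap_dim_one (c : ℝ) (hc : 1 ≤ c) :
    ∃ K : ℝ, 0 < K ∧ ∀ (m : ℕ) [NeZero m] (φ : ZMod m → ℂ)
      (a₀ a₁ : ZMod m) (n₁ n₂ : ℤ) (B : Finset (ZMod m)),
      2 ≤ (Finset.Icc n₁ n₂).card →
      Set.InjOn (fun n : ℤ => a₀ + (n : ZMod m) * a₁) (Finset.Icc n₁ n₂ : Set ℤ) →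
      B = (Finset.Icc n₁ n₂).image (fun n : ℤ => a₀ + (n : ZMod m) * a₁) →
      Real.sqrt m ≤ (B.card : ℝ) →
      (∀ x, ‖φ x‖ ≤ c) →
      ∀ D : Finset (ZMod m), (D.card : ℝ) ≤ c →
      (∀ a : ZMod m, a ∉ D → ‖corr φ a‖ ≤ c * Real.sqrt m) →
      ‖∑ x ∈ B, φ x‖ ≤
        K * (B.card : ℝ) * (Real.sqrt m / (B.card : ℝ)) ^ ((1 : ℝ) / 3) := by
  refine ⟨6 * c ^ 2, by positivity, ?_⟩
  intro m _ φ a₀ a₁ n₁ n₂ B _ hinj hB hsize hφ D hD hcorr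
  set N := #(Icc n₁ n₂)
  rw [image_Icc_eq_image_range] at hB
  have hinjN := injOn_range_of_injOn_Icc hinj
  have hcard : #B = N := by rw [hB, card_image_of_injOn hinjN, card_range]
  rw [hcard] at hsize ⊢
  rw [hB, sum_image hinjN, mul_assoc]
  set s := √(m : ℝ)
  set t := (N : ℝ) * (s / N) ^ (1 / 3 : ℝ)
  have hs : 1 ≤ s := Real.one_le_sqrt.mpr (by exact_mod_cast NeZero.one_le)
  have hcube : t ^ 3 = N ^ 2 * s := mul_rpow_one_third_pow_three (by linarith) (by linarith)
  have ht : 1 ≤ t := by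
    refine (one_le_pow_iff_of_nonneg (by positivity) three_ne_zero).mp ?_
    rw [hcube]
    nlinarith
  have hHN : ⌈t⌉₊ ≤ N := Nat.ceil_le.mpr (le_of_pow_three_eq (by linarith) hsize hcube)
  have hHt : (⌈t⌉₊ : ℝ) ≤ 2 * t := by linarith [Nat.ceil_lt_add_one (by linarith : 0 ≤ t)]
  have hmain := mul_norm_sum_ap_le hφ (ε := c * s) (by positivity) hinjN hHN D hcorr
  rw [← Real.sq_sqrt (Nat.cast_nonneg m)] at hmain
  exact le_of_mul_le_sqrt_add hc hD (by linarith) hsize (by linarith) hcube (Nat.le_ceil t)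
    hHt hmain
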